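/- arXiv:2310.16163 — 2 statements merged into one kernel-verified Lean document; each statement's English description precedes it below -/
import Mathlib

section
/- Let (ξ_k)_{k≥1} be an equinormed strongly multiplicative system (ESMS) of random variables that is uniformly bounded (there exists M such that |ξ_k| ≤ M almost surely for all k). Then for any sequence of real numbers (c_k) with ∑_{k=1}^∞ c_k² < ∞, the series ∑_{k=1}^∞ c_k ξ_k converges almost surely. -/
/-!
Products of distinct `ξ k` have mean zero, so `∏ (1 + d k * ξ k)` has mean one. Since
`exp (x - 2 x²) ≤ 1 + x` for `x ≥ -1/2`, this gives the sub-Gaussian bound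
`E exp (∑ d k * ξ k) ≤ exp (2 M² ∑ d k²)` whenever `M |d k| ≤ 1/2`, and Chernoff's bound turns it
into an exponential tail bound for `∑ c k * ξ k` at scale `M σ`, where `∑ c k² ≤ σ²`.

Cutting a block of indices into two halves of `c²`-mass at most `σ² / 2 ≤ (3σ/4)²` and the index
between them upgrades the tail bound to a maximal inequality for the partial sums over the block,
by induction on its length. Borel–Cantelli along blocks with small `c²`-tails then makes the
partial sums almost surely Cauchy.
-/

open MeasureTheory ProbabilityTheory Filter Finset

lemma Real.exp_sub_two_mul_sq_le_one_add {x : ℝ} (hx : -(1 / 2) ≤ x) :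
    Real.exp (x - 2 * x ^ 2) ≤ 1 + x := by
  have hpos : 0 < 1 + x := by linarith
  rw [← Real.le_log_iff_exp_le hpos]
  calc x - 2 * x ^ 2 ≤ 1 - (1 + x)⁻¹ := by
        rw [le_sub_iff_add_le, ← le_sub_iff_add_le', inv_le_iff_one_le_mul₀ hpos]
        nlinarith [sq_nonneg x]
    _ ≤ Real.log (1 + x) := Real.one_sub_inv_le_log_of_pos hpos

lemma Real.exp_sum_le_prod_one_add_mul_exp {ι : Type*} (s : Finset ι) {x : ι → ℝ}
    (hx : ∀ i ∈ s, -(1 / 2) ≤ x i) :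
    Real.exp (∑ i ∈ s, x i) ≤ (∏ i ∈ s, (1 + x i)) * Real.exp (2 * ∑ i ∈ s, x i ^ 2) :=
  calc Real.exp (∑ i ∈ s, x i)
      = (∏ i ∈ s, Real.exp (x i - 2 * x i ^ 2)) * Real.exp (2 * ∑ i ∈ s, x i ^ 2) := by
        rw [← Real.exp_sum, ← Real.exp_add, mul_sum, ← sum_add_distrib]
        simp
    _ ≤ (∏ i ∈ s, (1 + x i)) * Real.exp (2 * ∑ i ∈ s, x i ^ 2) :=
        mul_le_mul_of_nonneg_right (prod_le_prod (fun _ _ => (Real.exp_pos _).le)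
          fun i hi => Real.exp_sub_two_mul_sq_le_one_add (hx i hi)) (Real.exp_pos _).le

lemma exp_chaining_le {t : ℝ} (ht : 12 ≤ t) :
    Real.exp (-(4 / 3 * t)) + Real.exp (1 / 2 - 4 * t) + Real.exp (-(7 / 6 * t))
      ≤ Real.exp (-t) := by
  have key : ∀ y, 0 ≤ y → Real.exp (-t - y) ≤ Real.exp (-t) / (1 + y) := fun y hy => by
    rw [sub_eq_add_neg, Real.exp_add, le_div_iff₀ (by linarith), mul_assoc]
    refine mul_le_of_le_one_right (Real.exp_pos _).le ?_
    rw [Real.exp_neg, inv_mul_le_one₀ (Real.exp_pos _)]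
    linarith [Real.add_one_le_exp y]
  have h1 := key (t / 3) (by linarith)
  have h2 := key (3 * t - 1 / 2) (by linarith)
  have h3 := key (t / 6) (by linarith)
  have e := Real.exp_pos (-t)
  have d1 : Real.exp (-t) / (1 + t / 3) ≤ Real.exp (-t) / 5 :=
    div_le_div_of_nonneg_left e.le (by norm_num) (by linarith)
  have d2 : Real.exp (-t) / (1 + (3 * t - 1 / 2)) ≤ Real.exp (-t) / 5 :=
    div_le_div_of_nonneg_left e.le (by norm_num) (by linarith)
  have d3 : Real.exp (-t) / (1 + t / 6) ≤ Real.exp (-t) / 3 :=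
    div_le_div_of_nonneg_left e.le (by norm_num) (by linarith)
  rw [show -(4 / 3 * t) = -t - t / 3 by ring, show 1 / 2 - 4 * t = -t - (3 * t - 1 / 2) by ring,
    show -(7 / 6 * t) = -t - t / 6 by ring]
  linarith

lemma exists_sum_Ico_le_half_and_sum_Ico_le_half {g : ℕ → ℝ} (hg : ∀ k, 0 ≤ g k) {m N : ℕ}
    (hmN : m < N) {v : ℝ} (hv : ∑ k ∈ Ico m N, g k ≤ v) :
    ∃ p, m ≤ p ∧ p < N ∧ ∑ k ∈ Ico m p, g k ≤ v / 2 ∧ ∑ k ∈ Ico (p + 1) N, g k ≤ v / 2 := by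
  classical
  have hv0 : 0 ≤ v := (sum_nonneg fun k _ => hg k).trans hv
  set P : ℕ → Prop := fun j => ∑ k ∈ Ico m j, g k ≤ v / 2
  have hPm : P m := by simp only [P, Ico_self, sum_empty]; positivity
  set p := Nat.findGreatest P (N - 1)
  have hmp : m ≤ p := Nat.le_findGreatest (by omega) hPm
  have hpN : p ≤ N - 1 := Nat.findGreatest_le _
  refine ⟨p, hmp, by omega, Nat.findGreatest_spec (by omega) hPm, ?_⟩
  obtain hpN' | hpN' := lt_or_ge (p + 1) N
  · have hnot : ¬ P (p + 1) := Nat.findGreatest_is_greatest (Nat.lt_succ_self p) (by omega)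
    have hsplit := sum_Ico_consecutive g (by omega : m ≤ p + 1) hpN'.le
    simp only [P, not_le] at hnot
    linarith
  · simp only [Ico_eq_empty_of_le hpN', sum_empty]
    positivity

lemma not_exists_le_abs_sum_Ico_of_le {f : ℕ → ℝ} {m N : ℕ} (hNm : N ≤ m) {a : ℝ} (ha : 0 < a) :
    ¬ ∃ n ∈ Icc m N, a ≤ |∑ k ∈ Ico m n, f k| := by
  rintro ⟨n, hn, hle⟩
  rw [Ico_eq_empty_of_le ((mem_Icc.1 hn).2.trans hNm), sum_empty, abs_zero] at hle
  linarith

lemma exists_le_abs_sum_Ico_split {f : ℕ → ℝ} {m p N : ℕ} (hmp : m ≤ p) {a b : ℝ}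
    (h : ∃ n ∈ Icc m N, a ≤ |∑ k ∈ Ico m n, f k|) :
    (∃ n ∈ Icc m p, a ≤ |∑ k ∈ Ico m n, f k|) ∨ b ≤ |∑ k ∈ Ico m (p + 1), f k| ∨
      ∃ n ∈ Icc (p + 1) N, a - b ≤ |∑ k ∈ Ico (p + 1) n, f k| := by
  obtain ⟨n, hn, ha⟩ := h
  rw [mem_Icc] at hn
  by_cases hnp : n ≤ p
  · exact .inl ⟨n, mem_Icc.2 ⟨hn.1, hnp⟩, ha⟩
  refine .inr (or_iff_not_imp_left.2 fun hb => ⟨n, mem_Icc.2 ⟨by omega, hn.2⟩, ?_⟩)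
  rw [← sum_Ico_consecutive f (by omega : m ≤ p + 1) (by omega : p + 1 ≤ n)] at ha
  linarith [abs_add_le (∑ k ∈ Ico m (p + 1), f k) (∑ k ∈ Ico (p + 1) n, f k), not_le.1 hb]

lemma Summable.exists_forall_sum_Ico_lt {g : ℕ → ℝ} (hg : Summable g) {ε : ℝ} (hε : 0 < ε) :
    ∃ m, ∀ N, ∑ k ∈ Ico m N, g k < ε := by
  obtain ⟨s, hs⟩ := hg.vanishing (Iio_mem_nhds hε)
  obtain ⟨m, hm⟩ := s.exists_nat_subset_range
  refine ⟨m, fun N => hs _ (disjoint_of_subset_right hm (disjoint_left.2 fun k hk hk' => ?_))⟩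
  simp only [mem_Ico, mem_range] at hk hk'
  omega

lemma integrable_prod_of_ae_abs_le {ι Ω : Type*} [MeasurableSpace Ω] {μ : Measure Ω}
    [IsFiniteMeasure μ] {f : ι → Ω → ℝ}
    (hf : ∀ i, Measurable (f i)) {C : ι → ℝ} (hC : ∀ i, ∀ᵐ ω ∂μ, |f i ω| ≤ C i) (s : Finset ι) :
    Integrable (fun ω => ∏ i ∈ s, f i ω) μ := by
  refine .of_bound (Finset.measurable_prod s fun i _ => hf i).aestronglyMeasurable (∏ i ∈ s, C i) ?_
  filter_upwards [(eventually_all_finset s).2 fun i _ => hC i] with ω hω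
  rw [Real.norm_eq_abs, abs_prod]
  exact prod_le_prod (fun _ _ => abs_nonneg _) hω

lemma integrable_exp_sum {ι Ω : Type*} [MeasurableSpace Ω] {μ : Measure Ω} [IsFiniteMeasure μ]
    {ξ : ι → Ω → ℝ} (hξ : ∀ i, Measurable (ξ i)) {M : ℝ} (hM : ∀ i, ∀ᵐ ω ∂μ, |ξ i ω| ≤ M)
    (s : Finset ι) (d : ι → ℝ) : Integrable (fun ω => Real.exp (∑ i ∈ s, d i * ξ i ω)) μ := by
  simp_rw [Real.exp_sum]
  refine integrable_prod_of_ae_abs_le (fun i => ((hξ i).const_mul _).exp)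
    (C := fun i => Real.exp (|d i| * M)) (fun i => (hM i).mono fun ω hω => ?_) s
  rw [Real.abs_exp, Real.exp_le_exp]
  calc d i * ξ i ω ≤ |d i| * |ξ i ω| := by rw [← abs_mul]; exact le_abs_self _
    _ ≤ |d i| * M := by gcongr

/-- A multiplicative system in the sense of Alexits. -/
def IsMultiplicativeSystem {ι Ω : Type*} [MeasurableSpace Ω] (ξ : ι → Ω → ℝ) (μ : Measure Ω) :
    Prop :=
  ∀ s : Finset ι, s.Nonempty → ∫ ω, ∏ i ∈ s, ξ i ω ∂μ = 0

namespace IsMultiplicativeSystem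

section

variable {ι Ω : Type*} [MeasurableSpace Ω] {μ : Measure Ω} [IsProbabilityMeasure μ]
  {ξ : ι → Ω → ℝ} {M : ℝ} (hξ : ∀ i, Measurable (ξ i)) (hM : ∀ i, ∀ᵐ ω ∂μ, |ξ i ω| ≤ M)
include hξ hM

lemma integral_prod_one_add (h : IsMultiplicativeSystem ξ μ) (s : Finset ι) (d : ι → ℝ) :
    ∫ ω, ∏ i ∈ s, (1 + d i * ξ i ω) ∂μ = 1 := by
  have hterm (t : Finset ι) : ∫ ω, ∏ i ∈ t, d i * ξ i ω ∂μ
      = (∏ i ∈ t, d i) * ∫ ω, ∏ i ∈ t, ξ i ω ∂μ := by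
    simp_rw [prod_mul_distrib, integral_const_mul]
  simp_rw [prod_one_add]
  rw [integral_finsetSum _ fun t _ => ?_, sum_eq_single ∅]
  · simp
  · intro t _ ht
    rw [hterm, h t (nonempty_iff_ne_empty.2 ht), mul_zero]
  · simp
  · simp_rw [prod_mul_distrib]
    exact (integrable_prod_of_ae_abs_le hξ hM t).const_mul _

lemma integral_exp_sum_le (h : IsMultiplicativeSystem ξ μ) (s : Finset ι) {d : ι → ℝ}
    (hd : ∀ i ∈ s, M * |d i| ≤ 1 / 2) :
    ∫ ω, Real.exp (∑ i ∈ s, d i * ξ i ω) ∂μ ≤ Real.exp (2 * M ^ 2 * ∑ i ∈ s, d i ^ 2) := by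
  have hpoint : ∀ᵐ ω ∂μ, Real.exp (∑ i ∈ s, d i * ξ i ω)
      ≤ (∏ i ∈ s, (1 + d i * ξ i ω)) * Real.exp (2 * M ^ 2 * ∑ i ∈ s, d i ^ 2) := by
    filter_upwards [(eventually_all_finset s).2 fun i _ => hM i] with ω hω
    have hx (i) (hi : i ∈ s) : |d i * ξ i ω| ≤ M * |d i| := by
      rw [abs_mul, mul_comm M]; exact mul_le_mul_of_nonneg_left (hω i hi) (abs_nonneg _)
    have hx' (i) (hi : i ∈ s) : -(1 / 2) ≤ d i * ξ i ω :=
      neg_le_of_abs_le ((hx i hi).trans (hd i hi))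
    refine (Real.exp_sum_le_prod_one_add_mul_exp s hx').trans <| mul_le_mul_of_nonneg_left
      (Real.exp_le_exp.2 ?_) (prod_nonneg fun i hi => by linarith [hx' i hi])
    rw [mul_assoc, mul_sum s (fun i => d i ^ 2) (M ^ 2)]
    gcongr with i hi
    rw [← sq_abs, ← sq_abs (d i), ← mul_pow]
    exact pow_le_pow_left₀ (abs_nonneg _) (hx i hi) 2
  have hint : Integrable (fun ω => ∏ i ∈ s, (1 + d i * ξ i ω)) μ :=
    integrable_prod_of_ae_abs_le (fun i => measurable_const.add ((hξ i).const_mul _))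
      (C := fun i => 1 + |d i| * M) (fun i => (hM i).mono fun ω hω => by
        refine (abs_add_le _ _).trans ?_
        rw [abs_one, abs_mul]; gcongr) s
  calc ∫ ω, Real.exp (∑ i ∈ s, d i * ξ i ω) ∂μ
      ≤ ∫ ω, (∏ i ∈ s, (1 + d i * ξ i ω)) * Real.exp (2 * M ^ 2 * ∑ i ∈ s, d i ^ 2) ∂μ :=
        integral_mono_of_nonneg (ae_of_all _ fun _ => (Real.exp_pos _).le)
          (hint.mul_const _) hpoint
    _ = _ := by rw [integral_mul_const, integral_prod_one_add hξ hM h, one_mul]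

lemma measureReal_sum_ge_le_exp (h : IsMultiplicativeSystem ξ μ) (hM0 : 0 < M) {σ : ℝ} (hσ : 0 < σ)
    (s : Finset ι) {c : ι → ℝ} (hc : ∑ i ∈ s, c i ^ 2 ≤ σ ^ 2) (t : ℝ) :
    μ.real {ω | 2 * t * M * σ ≤ ∑ i ∈ s, c i * ξ i ω} ≤ Real.exp (1 / 2 - t) := by
  set l := (2 * M * σ)⁻¹ with hl
  have hl0 : 0 ≤ l := by positivity
  have hcσ (i) (hi : i ∈ s) : |c i| ≤ σ :=
    abs_le_of_sq_le_sq ((single_le_sum (fun j _ => sq_nonneg (c j)) hi).trans hc) hσ.le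
  have hd (i) (hi : i ∈ s) : M * |l * c i| ≤ 1 / 2 := by
    rw [abs_mul, abs_of_nonneg hl0, hl]
    calc M * ((2 * M * σ)⁻¹ * |c i|) ≤ M * ((2 * M * σ)⁻¹ * σ) := by gcongr; exact hcσ i hi
      _ = 1 / 2 := by field_simp
  have hlin (ω) : l * ∑ i ∈ s, c i * ξ i ω = ∑ i ∈ s, l * c i * ξ i ω := by
    rw [mul_sum]; simp only [mul_assoc]
  have hint : Integrable (fun ω => Real.exp (l * ∑ i ∈ s, c i * ξ i ω)) μ := by
    simpa only [hlin] using integrable_exp_sum hξ hM s (fun i => l * c i)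
  have hmgf : mgf (fun ω => ∑ i ∈ s, c i * ξ i ω) μ l ≤ Real.exp (1 / 2) :=
    calc ∫ ω, Real.exp (l * ∑ i ∈ s, c i * ξ i ω) ∂μ
        = ∫ ω, Real.exp (∑ i ∈ s, l * c i * ξ i ω) ∂μ := by simp only [hlin]
      _ ≤ Real.exp (2 * M ^ 2 * ∑ i ∈ s, (l * c i) ^ 2) := integral_exp_sum_le hξ hM h s hd
      _ ≤ Real.exp (1 / 2) := by
        rw [Real.exp_le_exp]
        simp_rw [mul_pow, ← mul_sum]
        calc 2 * M ^ 2 * (l ^ 2 * ∑ i ∈ s, c i ^ 2) ≤ 2 * M ^ 2 * (l ^ 2 * σ ^ 2) := by gcongr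
          _ = 1 / 2 := by rw [hl]; field_simp
  calc μ.real {ω | 2 * t * M * σ ≤ ∑ i ∈ s, c i * ξ i ω}
      ≤ Real.exp (-l * (2 * t * M * σ)) * mgf (fun ω => ∑ i ∈ s, c i * ξ i ω) μ l :=
        measure_ge_le_exp_mul_mgf _ hl0 hint
    _ ≤ Real.exp (-t) * Real.exp (1 / 2) := by
        have : -l * (2 * t * M * σ) = -t := by rw [hl]; field_simp
        rw [this]
        exact mul_le_mul_of_nonneg_left hmgf (Real.exp_pos _).le
    _ = Real.exp (1 / 2 - t) := by rw [← Real.exp_add, neg_add_eq_sub]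

lemma measureReal_abs_sum_ge_le_exp (h : IsMultiplicativeSystem ξ μ) (hM0 : 0 < M) {σ : ℝ}
    (hσ : 0 < σ) (s : Finset ι) {c : ι → ℝ} (hc : ∑ i ∈ s, c i ^ 2 ≤ σ ^ 2) (t : ℝ) :
    μ.real {ω | 2 * t * M * σ ≤ |∑ i ∈ s, c i * ξ i ω|} ≤ 2 * Real.exp (1 / 2 - t) := by
  have hneg : ∑ i ∈ s, (-c i) ^ 2 ≤ σ ^ 2 := by simpa only [neg_sq] using hc
  calc μ.real {ω | 2 * t * M * σ ≤ |∑ i ∈ s, c i * ξ i ω|}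
      ≤ μ.real ({ω | 2 * t * M * σ ≤ ∑ i ∈ s, c i * ξ i ω}
          ∪ {ω | 2 * t * M * σ ≤ ∑ i ∈ s, -c i * ξ i ω}) := by
        refine measureReal_mono fun ω hω => ?_
        simp only [Set.mem_ofPred_eq, Set.mem_union, neg_mul, sum_neg_distrib] at hω ⊢
        rcases le_abs'.1 hω with hle | hle
        · exact .inr (by linarith)
        · exact .inl hle
    _ ≤ Real.exp (1 / 2 - t) + Real.exp (1 / 2 - t) :=
        (measureReal_union_le _ _).trans (add_le_add
          (measureReal_sum_ge_le_exp hξ hM h hM0 hσ s hc t)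
          (measureReal_sum_ge_le_exp hξ hM h hM0 hσ s hneg t))
    _ = 2 * Real.exp (1 / 2 - t) := by ring

end

variable {Ω : Type*} [MeasurableSpace Ω] {μ : Measure Ω} [IsProbabilityMeasure μ]
  {ξ : ℕ → Ω → ℝ} {M : ℝ} (hξ : ∀ i, Measurable (ξ i)) (hM : ∀ i, ∀ᵐ ω ∂μ, |ξ i ω| ≤ M)
include hξ hM

lemma measureReal_exists_abs_sum_Ico_ge_le_exp (h : IsMultiplicativeSystem ξ μ) (hM0 : 0 < M)
    (c : ℕ → ℝ) {m N : ℕ} {σ : ℝ} (hσ : 0 < σ) (hc : ∑ k ∈ Ico m N, c k ^ 2 ≤ σ ^ 2) {t a : ℝ}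
    (ht : 12 ≤ t) (ha : 64 * t * M * σ ≤ a) :
    μ.real {ω | ∃ n ∈ Icc m N, a ≤ |∑ k ∈ Ico m n, c k * ξ k ω|} ≤ 2 * Real.exp (-t) := by
  induction hL : N - m using Nat.strong_induction_on generalizing m N σ t a with
  | _ L ih =>
    have ht0 : 0 < t := by linarith
    have ha0 : 0 < a := lt_of_lt_of_le (by positivity) ha
    obtain hNm | hmN := le_or_gt N m
    · refine (measureReal_mono (s₂ := ∅) fun ω hω =>
        absurd hω (not_exists_le_abs_sum_Ico_of_le hNm ha0)).trans ?_
      rw [measureReal_empty]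
      positivity
    obtain ⟨p, hmp, hpN, hleft, hright⟩ :=
      exists_sum_Ico_le_half_and_sum_Ico_le_half (fun k => sq_nonneg (c k)) hmN hc
    have hhalf : σ ^ 2 / 2 ≤ (3 / 4 * σ) ^ 2 := by nlinarith
    have hA := ih (p - m) (by omega) (by positivity) (hleft.trans hhalf) (t := 4 / 3 * t)
      (a := a) (by linarith)
      (by linarith [show 64 * (4 / 3 * t) * M * (3 / 4 * σ) = 64 * t * M * σ by ring]) rfl
    have hC := ih (N - (p + 1)) (by omega) (by positivity) (hright.trans hhalf) (t := 7 / 6 * t)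
      (a := a - a / 8) (by linarith)
      (by linarith [show 64 * (7 / 6 * t) * M * (3 / 4 * σ) = 7 / 8 * (64 * t * M * σ) by ring]) rfl
    have hB : μ.real {ω | a / 8 ≤ |∑ k ∈ Ico m (p + 1), c k * ξ k ω|}
        ≤ 2 * Real.exp (1 / 2 - 4 * t) :=
      (measureReal_mono fun ω (hω : a / 8 ≤ _) => show 2 * (4 * t) * M * σ ≤ _ by linarith).trans
        (measureReal_abs_sum_ge_le_exp hξ hM h hM0 hσ _ ((sum_le_sum_of_subset_of_nonneg
          (Ico_subset_Ico_right hpN) fun k _ _ => sq_nonneg (c k)).trans hc) (4 * t))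
    calc μ.real {ω | ∃ n ∈ Icc m N, a ≤ |∑ k ∈ Ico m n, c k * ξ k ω|}
        ≤ μ.real ({ω | ∃ n ∈ Icc m p, a ≤ |∑ k ∈ Ico m n, c k * ξ k ω|}
            ∪ {ω | a / 8 ≤ |∑ k ∈ Ico m (p + 1), c k * ξ k ω|}
            ∪ {ω | ∃ n ∈ Icc (p + 1) N, a - a / 8 ≤ |∑ k ∈ Ico (p + 1) n, c k * ξ k ω|}) :=
          measureReal_mono fun ω hω => by
            simpa only [Set.mem_union, Set.mem_ofPred_eq, or_assoc] using
              exists_le_abs_sum_Ico_split hmp hω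
      _ ≤ 2 * Real.exp (-(4 / 3 * t)) + 2 * Real.exp (1 / 2 - 4 * t)
            + 2 * Real.exp (-(7 / 6 * t)) :=
          (measureReal_union_le _ _).trans <| add_le_add ((measureReal_union_le _ _).trans
            (add_le_add hA hB)) hC
      _ ≤ 2 * Real.exp (-t) := by linarith [exp_chaining_le ht]

lemma measure_exists_abs_sum_Ico_ge_le_exp (h : IsMultiplicativeSystem ξ μ) (hM0 : 0 < M)
    (c : ℕ → ℝ) {m : ℕ} {σ : ℝ} (hσ : 0 < σ) (hc : ∀ N, ∑ k ∈ Ico m N, c k ^ 2 ≤ σ ^ 2) {t a : ℝ}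
    (ht : 12 ≤ t) (ha : 64 * t * M * σ ≤ a) :
    μ {ω | ∃ n ≥ m, a ≤ |∑ k ∈ Ico m n, c k * ξ k ω|} ≤ ENNReal.ofReal (2 * Real.exp (-t)) := by
  have hunion : {ω | ∃ n ≥ m, a ≤ |∑ k ∈ Ico m n, c k * ξ k ω|}
      = ⋃ N, {ω | ∃ n ∈ Icc m N, a ≤ |∑ k ∈ Ico m n, c k * ξ k ω|} := by
    ext ω
    simp only [Set.mem_ofPred_eq, Set.mem_iUnion, mem_Icc]
    exact ⟨fun ⟨n, hn, hle⟩ => ⟨n, n, ⟨hn, le_rfl⟩, hle⟩, fun ⟨_, n, hn, hle⟩ => ⟨n, hn.1, hle⟩⟩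
  have hmono : Monotone fun N => {ω | ∃ n ∈ Icc m N, a ≤ |∑ k ∈ Ico m n, c k * ξ k ω|} :=
    fun N N' hN ω ⟨n, hn, hle⟩ => ⟨n, Icc_subset_Icc_right hN hn, hle⟩
  rw [hunion, hmono.measure_iUnion]
  refine iSup_le fun N => ?_
  rw [← ofReal_measureReal]
  exact ENNReal.ofReal_le_ofReal
    (measureReal_exists_abs_sum_Ico_ge_le_exp hξ hM h hM0 c hσ (hc N) ht ha)

theorem ae_exists_tendsto_sum_range (h : IsMultiplicativeSystem ξ μ) {c : ℕ → ℝ}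
    (hc : Summable fun k => c k ^ 2) :
    ∀ᵐ ω ∂μ, ∃ L, Tendsto (fun n => ∑ k ∈ range n, c k * ξ k ω) atTop (nhds L) := by
  set M' := max M 1
  have hM' (i) : ∀ᵐ ω ∂μ, |ξ i ω| ≤ M' := (hM i).mono fun ω hω => hω.trans (le_max_left _ _)
  have hM'0 : 0 < M' := one_pos.trans_le (le_max_right _ _)
  -- at `t = j + 12` the threshold `64 * t * M' * σ j` of the maximal inequality is `(j + 12)⁻¹`
  set σ : ℕ → ℝ := fun j => (64 * M' * ((j : ℝ) + 12) ^ 2)⁻¹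
  have hσ (j) : 0 < σ j := by positivity
  choose m hm using fun j => hc.exists_forall_sum_Ico_lt (pow_pos (hσ j) 2)
  set E : ℕ → Set Ω :=
    fun j => {ω | ∃ n ≥ m j, ((j : ℝ) + 12)⁻¹ ≤ |∑ k ∈ Ico (m j) n, c k * ξ k ω|}
  have hE (j : ℕ) : μ (E j) ≤ ENNReal.ofReal (2 * Real.exp (-(j + 12))) :=
    measure_exists_abs_sum_Ico_ge_le_exp hξ hM' h hM'0 c (hσ j) (fun N => (hm j N).le)
      (by linarith [(j.cast_nonneg : (0 : ℝ) ≤ j)]) (le_of_eq (by simp only [σ]; field_simp))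
  have hsummable : Summable fun j : ℕ => 2 * Real.exp (-(j + 12)) :=
    (Real.summable_exp_neg_nat.mul_left 2).of_nonneg_of_le (fun j => by positivity)
      fun j => by gcongr; linarith
  filter_upwards [ae_eventually_notMem
    (ne_top_of_le_ne_top hsummable.tsum_ofReal_ne_top (ENNReal.tsum_le_tsum hE))] with ω hω
  refine cauchySeq_tendsto_of_complete (Metric.cauchySeq_iff'.2 fun ε hε => ?_)
  obtain ⟨J, hJ⟩ := eventually_atTop.1 hω
  obtain ⟨n₀, hn₀⟩ := exists_nat_one_div_lt hε
  set j := max J n₀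
  refine ⟨m j, fun n hn => ?_⟩
  have hsmall := hJ j (le_max_left _ _)
  simp only [E, Set.mem_ofPred_eq, not_exists, not_and, not_le] at hsmall
  rw [Real.dist_eq, ← sum_Ico_eq_sub _ hn]
  calc |∑ k ∈ Ico (m j) n, c k * ξ k ω| < ((j : ℝ) + 12)⁻¹ := hsmall n hn
    _ ≤ 1 / (n₀ + 1) := by
        rw [one_div]
        gcongr
        · exact_mod_cast le_max_right J n₀
        · norm_num
    _ < ε := hn₀

end IsMultiplicativeSystem

theorem esms_series_converges_ae_general
    {Ω : Type*} [MeasureSpace Ω] [IsProbabilityMeasure (ℙ : Measure Ω)]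
    (ξ : ℕ → Ω → ℝ) (hmeas : ∀ k, Measurable (ξ k))
    -- mean zero and unit second moment
    (hmean : ∀ k, 1 ≤ k → ∫ ω, ξ k ω = 0)
    -- strongly multiplicative: expectations of products with exponents in {1,2} factorize
    (hmult : ∀ (s : Finset ℕ) (r : ℕ → ℕ), (∀ i ∈ s, 1 ≤ i) →
      (∀ i ∈ s, r i = 1 ∨ r i = 2) →
      ∫ ω, ∏ i ∈ s, (ξ i ω) ^ (r i) = ∏ i ∈ s, ∫ ω, (ξ i ω) ^ (r i))
    -- uniform boundedness
    (hbdd : ∃ M : ℝ, ∀ k, 1 ≤ k → ∀ᵐ ω ∂ℙ, |ξ k ω| ≤ M)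
    (c : ℕ → ℝ) (hc : Summable fun k => (c k) ^ 2) :
    ∀ᵐ ω ∂ℙ, ∃ L : ℝ,
      Tendsto (fun n => ∑ k ∈ Finset.Icc 1 n, c k * ξ k ω) atTop (nhds L) := by
  obtain ⟨M, hM⟩ := hbdd
  have hsys : IsMultiplicativeSystem (fun k => ξ (k + 1)) ℙ := fun s ⟨i, hi⟩ => by
    have := hmult (s.map (addRightEmbedding 1)) (fun _ => 1) (by simp) (by simp)
    simp only [prod_map, pow_one, addRightEmbedding_apply] at this
    exact this.trans (prod_eq_zero hi (hmean _ (by omega)))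
  filter_upwards [hsys.ae_exists_tendsto_sum_range (fun k => hmeas (k + 1))
    (fun k => hM (k + 1) (by omega)) ((summable_nat_add_iff 1).2 hc)] with ω ⟨L, hL⟩
  refine ⟨L, hL.congr fun n => ?_⟩
  rw [range_eq_Ico, sum_Ico_add' (fun k => c k * ξ k ω), zero_add, Ico_add_one_right_eq_Icc]

/-- A uniformly bounded equinormed strongly multiplicative system (ESMS)
`ξ₁, ξ₂, …` satisfies: for any real sequence `(c_k)` with `∑ c_k² < ∞`, the series
`∑ c_k ξ_k` converges almost surely. -/
theorem esms_series_converges_ae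
    {Ω : Type*} [MeasureSpace Ω] [IsProbabilityMeasure (ℙ : Measure Ω)]
    (ξ : ℕ → Ω → ℝ) (hmeas : ∀ k, Measurable (ξ k))
    -- mean zero and unit second moment
    (hmean : ∀ k, 1 ≤ k → ∫ ω, ξ k ω = 0)
    (hvar : ∀ k, 1 ≤ k → ∫ ω, (ξ k ω) ^ 2 = 1)
    -- strongly multiplicative: expectations of products with exponents in {1,2} factorize
    (hmult : ∀ (s : Finset ℕ) (r : ℕ → ℕ), (∀ i ∈ s, 1 ≤ i) →
      (∀ i ∈ s, r i = 1 ∨ r i = 2) →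
      ∫ ω, ∏ i ∈ s, (ξ i ω) ^ (r i) = ∏ i ∈ s, ∫ ω, (ξ i ω) ^ (r i))
    -- uniform boundedness
    (hbdd : ∃ M : ℝ, ∀ k, 1 ≤ k → ∀ᵐ ω ∂ℙ, |ξ k ω| ≤ M)
    (c : ℕ → ℝ) (hc : Summable fun k => (c k) ^ 2) :
    ∀ᵐ ω ∂ℙ, ∃ L : ℝ,
      Tendsto (fun n => ∑ k ∈ Finset.Icc 1 n, c k * ξ k ω) atTop (nhds L) :=
  esms_series_converges_ae_general ξ hmeas hmean hmult hbdd c hc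
end

section
/- Let (ε_i)_{i≥1} be i.i.d. random variables with P(ε_1 = 1) = P(ε_1 = 0) = 1/2, and let Z_n be the length of the longest head run in the first n tosses. If (b_n) is a sequence of real numbers with ∑_{n=1}^∞ 2^{-b_n} = ∞, then almost surely Z_n ≥ b_n for infinitely many n. -/
/-!
Let `B n` be the event that the `⌈b n⌉₊` tosses ending at time `n` are all heads, so that
`Z n ≥ b n` on `B n`. Up to a factor `2`, `ℙ (B n) = 2 ^ (-b n)` unless `b n > n`, and those
`n` contribute a summable part, so `∑ ℙ (B n) = ∞`. These events are not independent, but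
their correlations decay geometrically:
`ℙ (B n ∩ B l) ≤ ℙ (B n) ℙ (B l) + ℙ (B n) 2 ^ (n - l)` for `n ≤ l`. Hence over any window
`∑∑ ℙ (B n ∩ B l) ≤ S² + C S` with `S = ∑ ℙ (B n)`, and the Chung–Erdős inequality
`S² ≤ (∑∑ ℙ (B n ∩ B l)) ℙ (⋃ B n)` (Cauchy–Schwarz for the number of events that occur)
gives `ℙ (⋃_{n ≥ M} B n) ≥ S / (S + C) → 1` for every `M`.
-/

open MeasureTheory ProbabilityTheory Filter Finset
open scoped ENNReal Topology

theorem tsum_pow_dist_le (r : ℝ≥0∞) (n : ℕ) : ∑' l, r ^ Nat.dist n l ≤ 2 * ∑' d, r ^ d := by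
  rw [← (ENNReal.summable.sum_add_tsum_nat_add' (k := n)), two_mul]
  gcongr ?_ + ?_
  · rw [← sum_range_reflect]
    calc ∑ j ∈ range n, r ^ Nat.dist n (n - 1 - j) = ∑ j ∈ range n, r ^ (j + 1) := by
          refine sum_congr rfl fun j hj => ?_
          rw [Nat.dist_eq_sub_of_le_right (by omega)]
          congr 1
          have := mem_range.1 hj
          omega
      _ ≤ ∑' j, r ^ (j + 1) := ENNReal.sum_le_tsum _
      _ ≤ ∑' d, r ^ d := ENNReal.tsum_comp_le_tsum_of_injective (add_left_injective 1) _
  · exact le_of_eq <| tsum_congr fun i => by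
      rw [Nat.dist_eq_sub_of_le (Nat.le_add_left n i), Nat.add_sub_cancel]

section SecondMoment

variable {Ω : Type*} [MeasurableSpace Ω] {μ : Measure Ω}

theorem sq_lintegral_le_lintegral_sq_mul_measure {f : Ω → ℝ≥0∞} (hf : Measurable f)
    {U : Set Ω} (hU : MeasurableSet U) (hfU : ∀ ω ∉ U, f ω = 0) :
    (∫⁻ ω, f ω ∂μ) ^ 2 ≤ (∫⁻ ω, f ω ^ 2 ∂μ) * μ U := by
  have hfU' : f = f * U.indicator 1 := by
    ext ω
    by_cases hω : ω ∈ U <;> simp [hω, hfU]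
  have hCS := ENNReal.lintegral_mul_le_Lp_mul_Lq μ .two_two hf.aemeasurable
    ((measurable_one.indicator hU).aemeasurable (f := U.indicator (1 : Ω → ℝ≥0∞)))
  rw [← hfU'] at hCS
  calc (∫⁻ ω, f ω ∂μ) ^ 2 ≤ _ := pow_le_pow_left₀ bot_le hCS 2
    _ = _ := by
      rw [mul_pow, ← ENNReal.rpow_natCast, ← ENNReal.rpow_natCast, ← ENNReal.rpow_mul,
        ← ENNReal.rpow_mul]
      norm_num
      congr 1
      rw [← lintegral_indicator_one hU]
      congr 1 with ω
      by_cases hω : ω ∈ U <;> simp [hω]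

theorem sq_sum_measure_le_sum_sum_measure_inter_mul {ι : Type*} (s : Finset ι) {B : ι → Set Ω}
    (hB : ∀ i, MeasurableSet (B i)) :
    (∑ i ∈ s, μ (B i)) ^ 2 ≤ (∑ i ∈ s, ∑ j ∈ s, μ (B i ∩ B j)) * μ (⋃ i ∈ s, B i) := by
  set f : Ω → ℝ≥0∞ := fun ω => ∑ i ∈ s, (B i).indicator 1 ω
  have hmeas : ∀ i, Measurable ((B i).indicator (1 : Ω → ℝ≥0∞)) :=
    fun i => measurable_one.indicator (hB i)
  have hint : ∫⁻ ω, f ω ∂μ = ∑ i ∈ s, μ (B i) := by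
    rw [lintegral_finsetSum _ fun i _ => hmeas i]
    simp_rw [lintegral_indicator_one (hB _)]
  have hsq : ∫⁻ ω, f ω ^ 2 ∂μ = ∑ i ∈ s, ∑ j ∈ s, μ (B i ∩ B j) := by
    have hpt : ∀ ω, f ω ^ 2 = ∑ i ∈ s, ∑ j ∈ s, (B i ∩ B j).indicator 1 ω := by
      intro ω
      simp only [f, sq, sum_mul_sum, Set.inter_indicator_one, Pi.mul_apply]
    simp_rw [hpt]
    rw [lintegral_finsetSum _ fun i _ => Finset.measurable_sum _ fun j _ =>
      measurable_one.indicator ((hB i).inter (hB j))]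
    simp_rw [lintegral_finsetSum _ fun j _ => measurable_one.indicator ((hB _).inter (hB j)),
      lintegral_indicator_one ((hB _).inter (hB _))]
  rw [← hint, ← hsq]
  refine sq_lintegral_le_lintegral_sq_mul_measure (Finset.measurable_sum _ fun i _ => hmeas i)
    (Finset.measurableSet_biUnion _ fun i _ => hB i) fun ω hω => ?_
  simp only [Set.mem_iUnion, not_exists] at hω
  exact sum_eq_zero fun i hi => Set.indicator_of_notMem (hω i hi) _

theorem sum_sum_measure_inter_le {B : ℕ → Set Ω} {r : ℝ≥0∞}
    (h : ∀ n l, n ≤ l → μ (B n ∩ B l) ≤ μ (B n) * μ (B l) + μ (B n) * r ^ (l - n))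
    (s : Finset ℕ) :
    ∑ n ∈ s, ∑ l ∈ s, μ (B n ∩ B l)
      ≤ (∑ n ∈ s, μ (B n)) ^ 2 + 4 * (∑' d, r ^ d) * ∑ n ∈ s, μ (B n) := by
  have hsymm : ∀ n l, μ (B n ∩ B l) ≤
      μ (B n) * μ (B l) + (μ (B n) * r ^ Nat.dist n l + μ (B l) * r ^ Nat.dist l n) := by
    intro n l
    rcases le_total n l with hnl | hln
    · rw [Nat.dist_eq_sub_of_le hnl, ← add_assoc]
      exact (h n l hnl).trans le_self_add
    · rw [Nat.dist_eq_sub_of_le hln, Set.inter_comm, mul_comm (μ (B n)), add_left_comm]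
      exact (h l n hln).trans le_add_self
  have hrow : ∀ n, ∑ l ∈ s, r ^ Nat.dist n l ≤ 2 * ∑' d, r ^ d :=
    fun n => (ENNReal.sum_le_tsum s).trans (tsum_pow_dist_le r n)
  calc ∑ n ∈ s, ∑ l ∈ s, μ (B n ∩ B l)
      ≤ ∑ n ∈ s, ∑ l ∈ s,
          (μ (B n) * μ (B l) + (μ (B n) * r ^ Nat.dist n l + μ (B l) * r ^ Nat.dist l n)) :=
        sum_le_sum fun n _ => sum_le_sum fun l _ => hsymm n l
    _ = (∑ n ∈ s, μ (B n)) ^ 2 + 2 * ∑ n ∈ s, μ (B n) * ∑ l ∈ s, r ^ Nat.dist n l := by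
        rw [sq, sum_mul_sum, two_mul]
        simp only [sum_add_distrib, mul_sum]
        rw [sum_comm (f := fun n l => μ (B l) * r ^ Nat.dist l n)]
    _ ≤ (∑ n ∈ s, μ (B n)) ^ 2 + 2 * ∑ n ∈ s, μ (B n) * (2 * ∑' d, r ^ d) := by
        gcongr with n
        exact hrow n
    _ = _ := by
        rw [← sum_mul]
        ring

theorem measure_iUnion_eq_one_of_measure_inter_le [IsProbabilityMeasure μ] {B : ℕ → Set Ω}
    {r : ℝ≥0∞} (hB : ∀ n, MeasurableSet (B n)) (hr : r < 1)
    (h : ∀ n l, n ≤ l → μ (B n ∩ B l) ≤ μ (B n) * μ (B l) + μ (B n) * r ^ (l - n))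
    (hdiv : ∑' n, μ (B n) = ∞) : μ (⋃ n, B n) = 1 := by
  set C := 4 * ∑' d, r ^ d
  have hC : C ≠ ∞ := ENNReal.mul_ne_top (by norm_num) (tsum_geometric_lt_top.2 hr).ne
  set u := μ (⋃ n, B n)
  by_contra hu
  have hu1 : u < 1 := prob_le_one.lt_of_ne hu
  have hbound : ∀ N, (∑ n ∈ range N, μ (B n)) * (1 - u) ≤ C := by
    intro N
    set S := ∑ n ∈ range N, μ (B n)
    have hS : S ≠ ∞ := ENNReal.sum_ne_top.2 fun n _ => measure_ne_top μ _
    have hCE : S * S ≤ S * ((S + C) * u) := by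
      calc S * S = S ^ 2 := (sq S).symm
        _ ≤ (S ^ 2 + C * S) * μ (⋃ n ∈ range N, B n) :=
          (sq_sum_measure_le_sum_sum_measure_inter_mul _ hB).trans
            (mul_le_mul_left (sum_sum_measure_inter_le h _) _)
        _ ≤ (S ^ 2 + C * S) * u := by
          gcongr
          exact measure_mono (Set.iUnion₂_subset_iUnion _ _)
        _ = S * ((S + C) * u) := by ring
    rcases eq_or_ne S 0 with hS0 | hS0
    · simp [hS0]
    have : S ≤ S * u + C :=
      calc S ≤ (S + C) * u := (ENNReal.mul_le_mul_iff_right hS0 hS).1 hCE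
        _ = S * u + C * u := add_mul _ _ _
        _ ≤ S * u + C := by gcongr; exact mul_le_of_le_one_right' prob_le_one
    rw [ENNReal.mul_sub fun _ _ => hS, mul_one]
    exact tsub_le_iff_left.2 this
  have htend : Tendsto (fun N => (∑ n ∈ range N, μ (B n)) * (1 - u)) atTop (𝓝 ∞) := by
    have := ENNReal.Tendsto.mul_const (ENNReal.tendsto_nat_tsum fun n => μ (B n)) (b := 1 - u)
      (Or.inr (ENNReal.sub_ne_top ENNReal.one_ne_top))
    rwa [hdiv, ENNReal.top_mul (tsub_pos_of_lt hu1).ne'] at this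
  exact hC (top_le_iff.1 (le_of_tendsto' htend hbound))

theorem ae_frequently_mem_of_measure_inter_le [IsProbabilityMeasure μ] {B : ℕ → Set Ω}
    {r : ℝ≥0∞} (hB : ∀ n, MeasurableSet (B n)) (hr : r < 1)
    (h : ∀ n l, n ≤ l → μ (B n ∩ B l) ≤ μ (B n) * μ (B l) + μ (B n) * r ^ (l - n))
    (hdiv : ∑' n, μ (B n) = ∞) : ∀ᵐ ω ∂μ, ∃ᶠ n in atTop, ω ∈ B n := by
  have htail : ∀ M, μ (⋃ n, B (n + M)) = 1 := by
    intro M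
    refine measure_iUnion_eq_one_of_measure_inter_le (fun n => hB _) hr
      (fun n l hnl => by simpa only [Nat.add_sub_add_right] using h (n + M) (l + M) (by omega)) ?_
    rw [← ENNReal.summable.sum_add_tsum_nat_add' (k := M)] at hdiv
    exact (ENNReal.add_eq_top.1 hdiv).resolve_left
      (ENNReal.sum_ne_top.2 fun n _ => measure_ne_top μ _)
  have hae : ∀ᵐ ω ∂μ, ∀ M, ω ∈ ⋃ n, B (n + M) := ae_all_iff.2 fun M =>
    (ae_mem_iff_measure_eq (MeasurableSet.iUnion fun n => hB _).nullMeasurableSet).2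
      (by rw [htail, measure_univ])
  filter_upwards [hae] with ω hω
  refine frequently_atTop.2 fun M => ?_
  obtain ⟨n, hn⟩ := Set.mem_iUnion.1 (hω M)
  exact ⟨n + M, le_add_self, hn⟩

end SecondMoment

section HeadRuns

variable {Ω : Type*} {ε : ℕ → Ω → ℕ} {n m : ℕ}

-- Without `m ≤ n`, truncated subtraction would turn this into "the first `n` tosses are heads".
def headRun (ε : ℕ → Ω → ℕ) (n m : ℕ) : Set Ω :=
  {ω | m ≤ n ∧ ∀ j ∈ Ioc (n - m) n, ε j ω = 1}

theorem headRun_eq_biInter (h : m ≤ n) :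
    headRun ε n m = ⋂ j ∈ Ioc (n - m) n, ε j ⁻¹' {1} := by
  ext ω
  simp [headRun, h]

theorem headRun_eq_empty (h : n < m) : headRun ε n m = ∅ :=
  Set.eq_empty_of_forall_notMem fun _ hω => h.not_ge hω.1

theorem le_sSup_of_mem_headRun {ω : Ω} (hω : ω ∈ headRun ε n m) :
    m ≤ sSup {ℓ : ℕ | ∃ k, k + ℓ ≤ n ∧ ∀ i < ℓ, ε (k + i + 1) ω = 1} :=
  le_csSup ⟨n, fun _ ⟨_, hk, _⟩ => by omega⟩
    ⟨n - m, by have := hω.1; omega,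
      fun i hi => hω.2 _ (by have := hω.1; simp only [mem_Ioc]; omega)⟩

variable [MeasurableSpace Ω] {μ : Measure Ω}

theorem measurableSet_headRun (hmeas : ∀ i, Measurable (ε i)) (n m : ℕ) :
    MeasurableSet (headRun ε n m) := by
  rcases le_or_gt m n with h | h
  · rw [headRun_eq_biInter h]
    exact Finset.measurableSet_biInter _ fun j _ => hmeas j (measurableSet_singleton 1)
  · rw [headRun_eq_empty h]
    exact .empty

variable {p : ℝ≥0∞}

theorem measure_biInter_preimage_one (hind : iIndepFun ε μ)
    (hp : ∀ i, μ {ω | ε i ω = 1} = p) (J : Finset ℕ) :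
    μ (⋂ j ∈ J, ε j ⁻¹' {1}) = p ^ J.card := by
  rw [hind.meas_biInter fun i _ => ⟨{1}, measurableSet_singleton 1, rfl⟩]
  simp only [Set.preimage, Set.mem_singleton_iff, hp, prod_const]

theorem measure_headRun (hind : iIndepFun ε μ) (hp : ∀ i, μ {ω | ε i ω = 1} = p) (n m : ℕ) :
    μ (headRun ε n m) = if m ≤ n then p ^ m else 0 := by
  split_ifs with h
  · rw [headRun_eq_biInter h, measure_biInter_preimage_one hind hp, Nat.card_Ioc]
    congr 1
    omega
  · rw [headRun_eq_empty (not_le.1 h), measure_empty]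

theorem measure_headRun_inter_le (hind : iIndepFun ε μ) (hp : ∀ i, μ {ω | ε i ω = 1} = p)
    (hp1 : p ≤ 1) {l : ℕ} (hnl : n ≤ l) (m' : ℕ) :
    μ (headRun ε n m ∩ headRun ε l m') ≤
      μ (headRun ε n m) * μ (headRun ε l m') + μ (headRun ε n m) * p ^ (l - n) := by
  rcases lt_or_ge n m with hm | hm
  · simp [headRun_eq_empty hm]
  rcases lt_or_ge l m' with hm' | hm'
  · simp [headRun_eq_empty hm']
  rw [headRun_eq_biInter hm, headRun_eq_biInter hm', ← Finset.set_biInter_inter]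
  simp only [measure_biInter_preimage_one hind hp, Nat.card_Ioc]
  by_cases hd : n ≤ l - m'
  · refine le_add_right (le_of_eq ?_)
    rw [card_union_of_disjoint, Nat.card_Ioc, Nat.card_Ioc, pow_add]
    exact disjoint_left.2 fun j hj hj' => by simp only [mem_Ioc] at hj hj'; omega
  · -- the two windows overlap, so together they cover `(n - m, l]`
    refine le_add_left ?_
    rw [← pow_add]
    refine pow_le_pow_right_of_le_one' hp1 ?_
    calc n - (n - m) + (l - n) = (Ioc (n - m) l).card := by simp only [Nat.card_Ioc]; omega
      _ ≤ _ := card_le_card fun j hj => by simp only [mem_Ioc, mem_union] at hj ⊢; omega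

end HeadRuns

theorem tsum_ite_half_pow_ceil_eq_top {b : ℕ → ℝ} (hb0 : ∀ᶠ n in atTop, 0 ≤ b n)
    (hb : ¬Summable fun n => (2 : ℝ) ^ (-b n)) :
    ∑' n, (if ⌈b n⌉₊ ≤ n then (1 / 2 : ℝ≥0∞) ^ ⌈b n⌉₊ else 0) = ∞ := by
  by_contra hfin
  set g : ℕ → ℝ := fun n => if ⌈b n⌉₊ ≤ n then (1 / 2 : ℝ) ^ ⌈b n⌉₊ else 0
  have hg : Summable g := by
    convert ENNReal.summable_toReal hfin using 2 with n
    simp only [g]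
    split_ifs <;> simp
  have half_pow (k : ℕ) : (1 / 2 : ℝ) ^ k = 2 ^ (-(k : ℝ)) := by
    rw [Real.rpow_neg zero_le_two, Real.rpow_natCast, one_div, inv_pow]
  refine hb (((hg.mul_left 2).add summable_geometric_two).of_norm_bounded_eventually ?_)
  rw [Nat.cofinite_eq_atTop]
  filter_upwards [hb0] with n hn
  rw [Real.norm_of_nonneg (by positivity)]
  by_cases hm : ⌈b n⌉₊ ≤ n
  · have hceil : (⌈b n⌉₊ : ℝ) < b n + 1 := Nat.ceil_lt_add_one hn
    calc (2 : ℝ) ^ (-b n) ≤ 2 ^ (1 + -(⌈b n⌉₊ : ℝ)) :=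
          Real.rpow_le_rpow_of_exponent_le one_le_two (by linarith)
      _ = 2 * g n := by simp only [g, if_pos hm, half_pow, Real.rpow_add two_pos, Real.rpow_one]
      _ ≤ 2 * g n + (1 / 2) ^ n := le_add_of_nonneg_right (by positivity)
  · have hlt : (n : ℝ) < b n := Nat.lt_ceil.1 (not_le.1 hm)
    calc (2 : ℝ) ^ (-b n) ≤ 2 ^ (-(n : ℝ)) :=
          Real.rpow_le_rpow_of_exponent_le one_le_two (by linarith)
      _ = 2 * g n + (1 / 2) ^ n := by simp only [g, if_neg hm, half_pow, mul_zero, zero_add]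

theorem longest_head_run_upper_lower_general
    {Ω : Type*} [MeasureSpace Ω] [IsProbabilityMeasure (ℙ : Measure Ω)]
    (ε : ℕ → Ω → ℕ) (hmeas : ∀ i, Measurable (ε i))
    (hindep : iIndepFun ε ℙ)
    (h1 : ∀ i, ℙ {ω | ε i ω = 1} = 1/2)
    (Z : ℕ → Ω → ℕ)
    (hZ : ∀ n ω, Z n ω =
      sSup {ℓ : ℕ | ∃ k, k + ℓ ≤ n ∧ ∀ i < ℓ, ε (k + i + 1) ω = 1})
    (b : ℕ → ℝ) (hb : ¬ Summable fun n => (2 : ℝ) ^ (-b n)) :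
    ∀ᵐ ω ∂ℙ, ∀ n₀ : ℕ, ∃ n > n₀, (Z n ω : ℝ) ≥ b n := by
  by_cases hb0 : ∀ᶠ n in atTop, 0 ≤ b n
  swap
  · refine ae_of_all _ fun ω n₀ => ?_
    obtain ⟨n, hn, hbn⟩ := frequently_atTop.1 (not_eventually.1 hb0) (n₀ + 1)
    exact ⟨n, hn, (not_le.1 hbn).le.trans (Nat.cast_nonneg _)⟩
  have hruns : ∀ᵐ ω ∂ℙ, ∃ᶠ n in atTop, ω ∈ headRun ε n ⌈b n⌉₊ := by
    refine ae_frequently_mem_of_measure_inter_le (fun n => measurableSet_headRun hmeas _ _)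
      (r := 1 / 2) (by norm_num)
      (fun n l hnl => measure_headRun_inter_le hindep h1 (by norm_num) hnl _) ?_
    simpa only [measure_headRun hindep h1] using tsum_ite_half_pow_ceil_eq_top hb0 hb
  filter_upwards [hruns] with ω hω n₀
  obtain ⟨n, hn, hωn⟩ := frequently_atTop.1 hω (n₀ + 1)
  refine ⟨n, hn, (Nat.le_ceil (b n)).trans ?_⟩
  rw [hZ]
  exact_mod_cast le_sSup_of_mem_headRun hωn

/-- (Erdős–Révész, upper-lower class.) For fair coin tossing, if
`∑ 2^{-b_n} = ∞` then almost surely `Z_n ≥ b_n` for infinitely many `n`, where `Z_n` is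
the length of the longest head run in the first `n` tosses. -/
theorem longest_head_run_upper_lower
    {Ω : Type*} [MeasureSpace Ω] [IsProbabilityMeasure (ℙ : Measure Ω)]
    (ε : ℕ → Ω → ℕ) (hmeas : ∀ i, Measurable (ε i))
    (hindep : iIndepFun ε ℙ)
    (h1 : ∀ i, ℙ {ω | ε i ω = 1} = 1/2)
    (h0 : ∀ i, ℙ {ω | ε i ω = 0} = 1/2)
    (Z : ℕ → Ω → ℕ)
    (hZ : ∀ n ω, Z n ω =
      sSup {ℓ : ℕ | ∃ k, k + ℓ ≤ n ∧ ∀ i < ℓ, ε (k + i + 1) ω = 1})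
    (b : ℕ → ℝ) (hb : ¬ Summable fun n => (2 : ℝ) ^ (-b n)) :
    ∀ᵐ ω ∂ℙ, ∀ n₀ : ℕ, ∃ n > n₀, (Z n ω : ℝ) ≥ b n :=
  longest_head_run_upper_lower_general ε hmeas hindep h1 Z hZ b hb
end
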